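/- If A is a tile of Z_{p^m} × Z_{p^m} with |A| = p, then A is a symplectic spectral set. -/

import Mathlib

open Complex
open scoped Classical

/-- The character value `e^{2πi t/n}` for `t : ZMod n`. -/
noncomputable def charVal (n : ℕ) (t : ZMod n) : ℂ :=
  Complex.exp (2 * Real.pi * Complex.I * (t.val : ℂ) / (n : ℂ))

/-- The symplectic form `⟨x,y⟩ = x₁y₂ - x₂y₁` on `ZMod n × ZMod n`. -/
def sympForm {n : ℕ} (x y : ZMod n × ZMod n) : ZMod n :=
  x.1 * y.2 - x.2 * y.1

/-- Symplectic Fourier transform of the indicator of `A`. -/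
noncomputable def symFT {n : ℕ} (A : Set (ZMod n × ZMod n)) (ξ : ZMod n × ZMod n) : ℂ :=
  ∑ᶠ a ∈ A, charVal n (sympForm a ξ)

/-- Euclidean Fourier transform of the indicator of `A`. -/
noncomputable def euclFT {n : ℕ} (A : Set (ZMod n × ZMod n)) (ξ : ZMod n × ZMod n) : ℂ :=
  ∑ᶠ a ∈ A, charVal n (a.1 * ξ.1 + a.2 * ξ.2)

/-- Difference set `ΔA = {a - a' : a,a' ∈ A, a ≠ a'}`. -/
def diffSet {G : Type*} [AddGroup G] (A : Set G) : Set G :=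
  {d | ∃ a ∈ A, ∃ a' ∈ A, a ≠ a' ∧ d = a - a'}

/-- `A ⊕ B = G`: every element of `G` is uniquely a sum `a + b` with `a ∈ A`, `b ∈ B`. -/
def IsTilingPair {G : Type*} [AddCommGroup G] (A B : Set G) : Prop :=
  ∀ g : G, ∃! p : G × G, p.1 ∈ A ∧ p.2 ∈ B ∧ p.1 + p.2 = g

/-- Symplectic orthogonal set `H^{⊥s}`. -/
def sympPerp {n : ℕ} (H : Set (ZMod n × ZMod n)) : Set (ZMod n × ZMod n) :=
  {g | ∀ h ∈ H, sympForm g h = 0}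

/-- `(A,S)` is a symplectic spectral pair: `|A| = |S|` and `ΔS ⊆ Z(1̂_A^{sym})`. -/
def IsSympSpectralPair {n : ℕ} (A S : Set (ZMod n × ZMod n)) : Prop :=
  Nat.card A = Nat.card S ∧ ∀ s ∈ S, ∀ s' ∈ S, s ≠ s' → symFT A (s - s') = 0

/-! A tile `A` with at least two elements is annihilated by some nontrivial character:
otherwise the identity `1̂_A · 1̂_B = |G| δ₀` would force `1̂_B` to be supported at `0`, so `1_B`
would be constant by Fourier inversion. Every character of `Z_n²` is `g ↦ e(⟨g, ξ⟩)` for some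
`ξ`, so `1̂_A^{sym}(ξ) = 0` for some `ξ ≠ 0`. Replacing `ξ` by `u • ξ` for a unit `u` applies the
Galois automorphism `ζ ↦ ζ^u` of `ℚ(ζ_n)` to this vanishing sum, so `1̂_A^{sym}` vanishes on all
of `(Z_n)ˣ • ξ`. As differences of distinct elements of `{0, …, p - 1}` are units mod `p^m`, the
set `{k • ξ : k < p}` is a spectrum. -/

open Polynomial

theorem IsPrimitiveRoot.sum_pow_pow_eq_zero_of_coprime {K ι : Type*} [Field K] [CharZero K]
    {ζ : K} {n k : ℕ} (hζ : IsPrimitiveRoot ζ n) (hn : 0 < n) (hk : k.Coprime n)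
    (s : Finset ι) (e : ι → ℕ) (h : ∑ i ∈ s, ζ ^ e i = 0) :
    ∑ i ∈ s, (ζ ^ k) ^ e i = 0 := by
  have aeval_eq (z : K) : aeval z (∑ i ∈ s, X ^ e i : ℚ[X]) = ∑ i ∈ s, z ^ e i := by simp
  have hminpoly : minpoly ℚ ζ = minpoly ℚ (ζ ^ k) := by
    rw [← cyclotomic_eq_minpoly_rat hζ hn,
      ← cyclotomic_eq_minpoly_rat (hζ.pow_of_coprime k hk) hn]
  rw [← aeval_eq] at h ⊢
  exact aeval_eq_zero_of_dvd_aeval_eq_zero (hminpoly ▸ minpoly.dvd ℚ ζ h) (minpoly.aeval ℚ _)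

theorem AddChar.sum_unit_smul_eq_zero {n : ℕ} [NeZero n] {G : Type*} [AddCommGroup G]
    [Module (ZMod n) G] (χ : AddChar G ℂ) (s : Finset G) (h : ∑ a ∈ s, χ a = 0) {u : ZMod n}
    (hu : IsUnit u) : ∑ a ∈ s, χ (u • a) = 0 := by
  obtain ⟨ζ, hζ⟩ : ∃ ζ : ℂ, IsPrimitiveRoot ζ n :=
    ⟨_, Complex.isPrimitiveRoot_exp n (NeZero.ne n)⟩
  have hpow (a : G) : χ a ^ n = 1 := by
    rw [← χ.map_nsmul_eq_pow, ← Nat.cast_smul_eq_nsmul (ZMod n), ZMod.natCast_self, zero_smul,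
      χ.map_zero_eq_one]
  choose e _ he using fun a => hζ.eq_pow_of_pow_eq_one (hpow a)
  have hsmul (a : G) : χ (u • a) = (ζ ^ u.val) ^ e a := by
    rw [← pow_mul, mul_comm u.val, pow_mul, he, ← χ.map_nsmul_eq_pow,
      ← Nat.cast_smul_eq_nsmul (ZMod n), ZMod.natCast_zmod_val]
  simp only [hsmul]
  refine hζ.sum_pow_pow_eq_zero_of_coprime (NeZero.pos n) ?_ s e (by simpa only [he] using h)
  simpa using ZMod.val_coe_unit_coprime hu.unit

namespace IsTilingPair

variable {G : Type*} [AddCommGroup G] {A B : Set G}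

theorem exists_mem_add_sub_notMem (h : IsTilingPair A B) {a₁ a₂ : G} (h₁ : a₁ ∈ A)
    (h₂ : a₂ ∈ A) (hne : a₁ ≠ a₂) : ∃ b ∈ B, b + a₁ - a₂ ∉ B := by
  obtain ⟨⟨a, b⟩, ⟨-, hb, -⟩, -⟩ := h 0
  refine ⟨b, hb, fun hb' => hne ?_⟩
  have hpair := (h (a₁ + b)).unique (y₁ := (a₁, b)) (y₂ := (a₂, b + a₁ - a₂))
    ⟨h₁, hb, rfl⟩ ⟨h₂, hb', by dsimp only; abel⟩
  exact congrArg Prod.fst hpair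

variable [Fintype G]

theorem sum_sum_add {M : Type*} [AddCommMonoid M] (h : IsTilingPair A B) (f : G → M) :
    ∑ a ∈ A.toFinset, ∑ b ∈ B.toFinset, f (a + b) = ∑ g, f g := by
  rw [← Finset.sum_product']
  refine Finset.sum_bij (fun x _ => x.1 + x.2) (fun _ _ => Finset.mem_univ _) ?_ ?_
    (fun _ _ => rfl)
  · intro x hx y hy hxy
    simp only [Finset.mem_product, Set.mem_toFinset] at hx hy
    exact (h (x.1 + x.2)).unique ⟨hx.1, hx.2, rfl⟩ ⟨hy.1, hy.2, hxy.symm⟩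
  · intro g _
    obtain ⟨q, ⟨hqA, hqB, hq⟩, -⟩ := h g
    exact ⟨q, by simpa using ⟨hqA, hqB⟩, hq⟩

theorem sum_mul_sum_addChar (h : IsTilingPair A B) (ψ : AddChar G ℂ) :
    (∑ a ∈ A.toFinset, ψ a) * ∑ b ∈ B.toFinset, ψ b = ∑ g, ψ g := by
  simp only [Finset.sum_mul_sum, ← AddChar.map_add_eq_mul, h.sum_sum_add]

theorem exists_addChar_ne_zero_sum_eq_zero (h : IsTilingPair A B) (hA : A.Nontrivial) :
    ∃ ψ : AddChar G ℂ, ψ ≠ 0 ∧ ∑ a ∈ A.toFinset, ψ a = 0 := by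
  obtain ⟨a₁, h₁, a₂, h₂, hne⟩ := hA
  by_contra! hA
  have hB (ψ : AddChar G ℂ) (hψ : ψ ≠ 0) : ∑ b ∈ B.toFinset, ψ b = 0 := by
    have := h.sum_mul_sum_addChar ψ
    rw [AddChar.sum_eq_zero_iff_ne_zero.mpr hψ] at this
    exact (mul_eq_zero.mp this).resolve_left (hA ψ hψ)
  have hcard (x : G) : (if x ∈ B then (Fintype.card G : ℂ) else 0) = B.toFinset.card := by
    calc (if x ∈ B then (Fintype.card G : ℂ) else 0)
        = ∑ b ∈ B.toFinset, ∑ ψ : AddChar G ℂ, ψ (b - x) := by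
          simp only [AddChar.sum_apply_eq_ite, sub_eq_zero, Finset.sum_ite_eq', Set.mem_toFinset]
      _ = ∑ ψ : AddChar G ℂ, (∑ b ∈ B.toFinset, ψ b) * ψ (-x) := by
          rw [Finset.sum_comm]
          simp only [Finset.sum_mul, sub_eq_add_neg, AddChar.map_add_eq_mul]
      _ = B.toFinset.card := by
          rw [Finset.sum_eq_single 0 (fun ψ _ hψ => by rw [hB ψ hψ, zero_mul]) (by simp)]
          simp
  obtain ⟨b, hb, hb'⟩ := h.exists_mem_add_sub_notMem h₁ h₂ hne
  have := (hcard b).trans (hcard (b + a₁ - a₂)).symm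
  simp [hb, hb'] at this

end IsTilingPair

section Symplectic

variable {n : ℕ} [NeZero n]

theorem charVal_eq_stdAddChar (t : ZMod n) : charVal n t = ZMod.stdAddChar t := by
  rw [ZMod.stdAddChar_apply, ZMod.toCircle_apply, charVal]

noncomputable def sympChar (ξ : ZMod n × ZMod n) : AddChar (ZMod n × ZMod n) ℂ :=
  ZMod.stdAddChar.compAddMonoidHom <| AddMonoidHom.mk' (sympForm · ξ) fun a b => by
    simp only [sympForm, Prod.fst_add, Prod.snd_add]
    ring

theorem sympChar_apply (ξ g : ZMod n × ZMod n) : sympChar ξ g = charVal n (sympForm g ξ) := by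
  rw [charVal_eq_stdAddChar]
  rfl

theorem sympChar_zero : sympChar (0 : ZMod n × ZMod n) = 0 := by
  ext g
  simp [sympChar_apply, sympForm, charVal]

theorem sympChar_smul (u : ZMod n) (ξ g : ZMod n × ZMod n) :
    sympChar (u • ξ) g = sympChar ξ (u • g) := by
  simp only [sympChar_apply, sympForm, Prod.smul_fst, Prod.smul_snd, smul_eq_mul]
  ring_nf

theorem sympChar_injective : Function.Injective (sympChar (n := n)) := by
  intro ξ η h
  have hform (g : ZMod n × ZMod n) : sympForm g ξ = sympForm g η :=
    ZMod.injective_stdAddChar (DFunLike.congr_fun h g)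
  have h₁ := hform (0, 1)
  have h₂ := hform (1, 0)
  simp only [sympForm] at h₁ h₂
  ext <;> simp_all

theorem sympChar_surjective : Function.Surjective (sympChar (n := n)) := by
  refine ((Fintype.bijective_iff_injective_and_card _).mpr ⟨sympChar_injective, ?_⟩).2
  rw [AddChar.card_eq]

theorem symFT_eq_sum (A : Set (ZMod n × ZMod n)) (ξ : ZMod n × ZMod n) :
    symFT A ξ = ∑ a ∈ A.toFinset, sympChar ξ a := by
  simp only [symFT, finsum_mem_eq_toFinset_sum, sympChar_apply]

theorem symFT_unit_smul_eq_zero {A : Set (ZMod n × ZMod n)} {ξ : ZMod n × ZMod n}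
    (h : symFT A ξ = 0) {u : ZMod n} (hu : IsUnit u) : symFT A (u • ξ) = 0 := by
  rw [symFT_eq_sum] at h ⊢
  simp only [sympChar_smul]
  exact (sympChar ξ).sum_unit_smul_eq_zero _ h hu

theorem IsTilingPair.exists_symFT_eq_zero {A B : Set (ZMod n × ZMod n)} (h : IsTilingPair A B)
    (hA : A.Nontrivial) : ∃ ξ ≠ 0, symFT A ξ = 0 := by
  obtain ⟨ψ, hψ, hsum⟩ := h.exists_addChar_ne_zero_sum_eq_zero hA
  obtain ⟨ξ, rfl⟩ := sympChar_surjective ψ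
  exact ⟨ξ, by rintro rfl; exact hψ sympChar_zero, by rwa [symFT_eq_sum]⟩

theorem isSympSpectralPair_range_smul {ι : Type*} {A : Set (ZMod n × ZMod n)}
    {ξ : ZMod n × ZMod n} (hξ : ξ ≠ 0) (hA : symFT A ξ = 0) (f : ι → ZMod n)
    (hf : Pairwise fun i j => IsUnit (f i - f j)) (hcard : Nat.card A = Nat.card ι) :
    IsSympSpectralPair A (Set.range fun i => f i • ξ) := by
  have hinj : Function.Injective fun i => f i • ξ := by
    intro i j hij
    by_contra hne
    exact hξ ((hf hne).smul_eq_zero.mp (by rw [sub_smul]; exact sub_eq_zero.mpr hij))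
  refine ⟨by rw [hcard, Nat.card_range_of_injective hinj], ?_⟩
  rintro _ ⟨i, rfl⟩ _ ⟨j, rfl⟩ hne
  rw [← sub_smul]
  exact symFT_unit_smul_eq_zero hA (hf fun hij => hne (by rw [hij]))

end Symplectic

theorem ZMod.isUnit_natCast_sub_natCast {p m i j : ℕ} (hp : p.Prime) (hi : i < p) (hj : j < p)
    (hij : i ≠ j) : IsUnit ((i : ZMod (p ^ m)) - j) := by
  wlog hji : j < i generalizing i j
  · simpa using (this hj hi hij.symm (by omega)).neg
  rw [← Nat.cast_sub hji.le, ZMod.isUnit_iff_coprime]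
  exact Nat.Coprime.pow_right m <| Nat.coprime_comm.mp <|
    hp.coprime_iff_not_dvd.mpr (Nat.not_dvd_of_pos_of_lt (by omega) (by omega))

theorem tile_card_p_is_spectral_general (p m : ℕ) (hp : p.Prime)
    (A : Set (ZMod (p ^ m) × ZMod (p ^ m))) (hcard : Nat.card A = p)
    (htile : ∃ B, IsTilingPair A B) :
    ∃ S, IsSympSpectralPair A S := by
  obtain ⟨B, hAB⟩ := htile
  have : NeZero (p ^ m) := ⟨pow_ne_zero m hp.ne_zero⟩
  have hA : A.Nontrivial :=
    Set.nontrivial_coe_sort.mp (Finite.one_lt_card_iff_nontrivial.mp (hcard.symm ▸ hp.one_lt))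
  obtain ⟨ξ, hξ, hAξ⟩ := hAB.exists_symFT_eq_zero hA
  refine ⟨_, isSympSpectralPair_range_smul hξ hAξ (fun k : Fin p => ((k : ℕ) : ZMod (p ^ m)))
    (fun i j hij => ZMod.isUnit_natCast_sub_natCast hp i.isLt j.isLt (Fin.val_ne_of_ne hij))
    (by rw [hcard, Nat.card_fin])⟩

theorem tile_card_p_is_spectral (p m : ℕ) (hp : p.Prime) (hm : 1 ≤ m)
    (A : Set (ZMod (p ^ m) × ZMod (p ^ m))) (hcard : Nat.card A = p)
    (htile : ∃ B, IsTilingPair A B) :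
    ∃ S, IsSympSpectralPair A S :=
  tile_card_p_is_spectral_general p m hp A hcard htile
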